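/- arXiv:2209.00919 — 2 statements merged into one kernel-verified Lean document; each statement's English description precedes it below -/
import Mathlib

section
/- Let 𝔽_q be a finite field of characteristic 2, let c, d ∈ 𝔽_q and b, η ∈ 𝔽_q^×, and set f₁(X) := ηb²X⁴ + ηc²X² + dX and f₂(X) := ηd²X⁴ + ηc²X² + bX. Then the number of roots of f₁ in 𝔽_q equals the number of roots of f₂ in 𝔽_q, i.e. |{x ∈ 𝔽_q : f₁(x) = 0}| = |{x ∈ 𝔽_q : f₂(x) = 0}|. -/
/-!
For `d ≠ 0` the substitution `x ↦ (d / b) x` turns `f₁` into `(d / b)² f₂`, so the two root sets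
are in bijection. For `d = 0` the Frobenius makes `f₁ = η (X (bX + c))²` in characteristic 2,
while `f₂ = X (ηc²X + b)`; both have the root `0` and a second, distinct root exactly when `c ≠ 0`.
-/

theorem Set.ncard_setOf_congr_equiv {α β : Type*} {p : α → Prop} {q : β → Prop}
    (e : β ≃ α) (h : ∀ x, p (e x) ↔ q x) :
    {x | p x}.ncard = {x | q x}.ncard := by
  have hpre : e ⁻¹' {x | p x} = {x | q x} := Set.ext h
  rw [← hpre, Set.ncard_preimage_of_injective_subset_range e.injective (by simp)]

open Classical in
theorem ncard_setOf_mul_linear_eq_zero {F : Type*} [Field F] {a e : F} (h : a ≠ 0 ∨ e ≠ 0) :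
    {x : F | x * (a * x + e) = 0}.ncard = if a ≠ 0 ∧ e ≠ 0 then 2 else 1 := by
  rcases eq_or_ne a 0 with rfl | ha
  · have hset : {x : F | x * (0 * x + e) = 0} = {0} := by
      ext x; simp [h.resolve_left (not_not.mpr rfl)]
    rw [hset]
    simp
  · have hset : {x : F | x * (a * x + e) = 0} = {0, -e / a} := by
      ext x
      simp only [Set.mem_ofPred_eq, Set.mem_insert_iff, Set.mem_singleton_iff, mul_eq_zero,
        eq_div_iff ha]
      constructor <;> rintro (h | h) <;> [left; right; left; right] <;> linear_combination h
    rw [hset]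
    rcases eq_or_ne e 0 with rfl | he
    · simp
    · rw [Set.ncard_pair (div_ne_zero (neg_ne_zero.mpr he) ha).symm]
      simp [ha, he]

theorem statement17_general (F : Type*) [Field F] [CharP F 2]
    (c d b η : F) (hb : b ≠ 0) (hη : η ≠ 0) :
    {x : F | η * b ^ 2 * x ^ 4 + η * c ^ 2 * x ^ 2 + d * x = 0}.ncard =
      {x : F | η * d ^ 2 * x ^ 4 + η * c ^ 2 * x ^ 2 + b * x = 0}.ncard := by
  rcases eq_or_ne d 0 with rfl | hd
  · have h2 : (2 : F) = 0 := CharTwo.two_eq_zero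
    have hf₁ : ∀ x : F, η * b ^ 2 * x ^ 4 + η * c ^ 2 * x ^ 2 + 0 * x = η * (x * (b * x + c)) ^ 2 :=
      fun x ↦ by linear_combination (-η * b * c * x ^ 3) * h2
    have hf₂ : ∀ x : F, η * 0 ^ 2 * x ^ 4 + η * c ^ 2 * x ^ 2 + b * x = x * (η * c ^ 2 * x + b) :=
      fun x ↦ by ring
    simp only [hf₁, hf₂, mul_eq_zero_iff_left hη, pow_eq_zero_iff two_ne_zero]
    rw [ncard_setOf_mul_linear_eq_zero (.inl hb), ncard_setOf_mul_linear_eq_zero (.inr hb)]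
    classical
    simp [hb, hη, and_comm]
  · refine Set.ncard_setOf_congr_equiv (Equiv.mulLeft₀ (d / b) (by simp [hd, hb]))
      fun x ↦ ?_
    have hscale : η * b ^ 2 * (d / b * x) ^ 4 + η * c ^ 2 * (d / b * x) ^ 2 + d * (d / b * x) =
        (d / b) ^ 2 * (η * d ^ 2 * x ^ 4 + η * c ^ 2 * x ^ 2 + b * x) := by
      field_simp
    simp [hscale, hd, hb]

/-- Let `𝔽_q` be a finite field of characteristic 2, `c d ∈ 𝔽_q`,
`b η ∈ 𝔽_q^×`, and set `f₁(X) = ηb²X⁴ + ηc²X² + dX`, `f₂(X) = ηd²X⁴ + ηc²X² + bX`. Then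
`f₁` and `f₂` have the same number of roots in `𝔽_q`. -/
theorem statement17 (F : Type*) [Field F] [Fintype F] [CharP F 2]
    (c d b η : F) (hb : b ≠ 0) (hη : η ≠ 0) :
    {x : F | η * b ^ 2 * x ^ 4 + η * c ^ 2 * x ^ 2 + d * x = 0}.ncard =
      {x : F | η * d ^ 2 * x ^ 4 + η * c ^ 2 * x ^ 2 + b * x = 0}.ncard :=
  statement17_general F c d b η hb hη
end

section
/- Let G be a finite group, N a normal subgroup of G, and H an abelian subgroup of G with G = NH. Let H₀ be a subgroup of H and let χ: N → ℂ^× be a one-dimensional representation of N such that the induced representation Ind_N^{NH₀}(χ) is irreducible and is stabilized by G (i.e. its conjugate by every g ∈ G is equivalent to itself). Then Ind_N^{NH₀}(χ) extends to a representation of G. -/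
noncomputable section

/-- Isomorphism (equivalence) of two representations of `G`, possibly on different spaces. -/
def RepIso {G : Type*} [Group G] {V W : Type*} [AddCommGroup V] [Module ℂ V]
    [AddCommGroup W] [Module ℂ W] (ρ : Representation ℂ G V) (σ : Representation ℂ G W) : Prop :=
  ∃ e : V ≃ₗ[ℂ] W, ∀ (g : G) (v : V), e (ρ g v) = σ g (e v)

/-- Irreducibility of a representation: the space is nonzero and has no proper nonzero
invariant subspaces. -/
def IsIrreducibleRep {G : Type*} [Group G] {V : Type*} [AddCommGroup V] [Module ℂ V]
    (ρ : Representation ℂ G V) : Prop :=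
  Nontrivial V ∧
    ∀ U : Submodule ℂ V, (∀ (g : G) (v : V), v ∈ U → ρ g v ∈ U) → U = ⊥ ∨ U = ⊤

/-- For subgroups `K ≤ C` of `G`, a one-dimensional character `χ` of `K`, and a representation
`ρ` of `C`: `ρ` lies above `χ` (i.e. `χ` is a constituent of the restriction of `ρ` to `K`;
equivalently, `ρ` is a constituent of the representation induced from `χ`). -/
def liesAboveChar {G : Type*} [Group G] {K C : Subgroup G} (hKC : K ≤ C)
    {V : Type*} [AddCommGroup V] [Module ℂ V] (χ : K →* ℂˣ)
    (ρ : Representation ℂ C V) : Prop :=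
  ∃ v : V, v ≠ 0 ∧ ∀ k : K, ρ ⟨(k : G), hKC k.2⟩ v = (χ k : ℂ) • v

/-- For subgroups `D ≤ C` of `G`, a representation `φ` of `D` and a representation `ρ` of `C`:
`ρ` lies above `φ` (there is a nonzero intertwiner `φ → ρ|_D`). -/
def liesAboveRep {G : Type*} [Group G] {D C : Subgroup G} (hDC : D ≤ C)
    {V W : Type*} [AddCommGroup V] [Module ℂ V] [AddCommGroup W] [Module ℂ W]
    (φ : Representation ℂ D W) (ρ : Representation ℂ C V) : Prop :=
  ∃ T : W →ₗ[ℂ] V, T ≠ 0 ∧ ∀ (d : D) (w : W), T (φ d w) = ρ ⟨(d : G), hDC d.2⟩ (T w)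

section Induction

variable {G : Type*} [Group G] {H : Subgroup G} {W : Type*} [AddCommGroup W] [Module ℂ W]

/-- Carrier of the representation of `G` induced from the representation `σ` of the
subgroup `H`. -/
def indCarrier (σ : Representation ℂ H W) : Submodule ℂ (G → W) where
  carrier := {f | ∀ (h : H) (g : G), f ((h : G) * g) = σ h (f g)}
  add_mem' := by
    intro f g hf hg h x
    simp only [Pi.add_apply, hf h x, hg h x, map_add]
  zero_mem' := by
    intro h x
    simp
  smul_mem' := by
    intro c f hf h x
    simp only [Pi.smul_apply, hf h x, map_smul]

/-- The representation of `G` induced from the representation `σ` of the subgroup `H`. -/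
def ind (σ : Representation ℂ H W) : Representation ℂ G (indCarrier σ) where
  toFun g₀ :=
    { toFun := fun f => ⟨fun g => f.1 (g * g₀), fun h x => by
        have := f.2 h (x * g₀)
        simpa [mul_assoc] using this⟩
      map_add' := by intro f g; rfl
      map_smul' := by intro c f; rfl }
  map_one' := by
    apply LinearMap.ext
    intro f
    apply Subtype.ext
    funext g
    simp
  map_mul' := by
    intro a b
    apply LinearMap.ext
    intro f
    apply Subtype.ext
    funext g
    simp [mul_assoc]

end Induction

/-- The one-dimensional representation on `ℂ` attached to a character `χ : G →* ℂˣ`. -/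
def charRep {G : Type*} [Group G] (χ : G →* ℂˣ) : Representation ℂ G ℂ :=
  (DistribMulAction.toModuleEnd ℂ ℂ).comp χ

/-- Conjugation automorphism of a subgroup `K` by an element `g` normalizing `K`. -/
def conjHom {G : Type*} [Group G] (K : Subgroup G) (g : G)
    (h : ∀ k ∈ K, g * k * g⁻¹ ∈ K) : K →* K where
  toFun k := ⟨g * (k : G) * g⁻¹, h _ k.2⟩
  map_one' := by ext; simp
  map_mul' := by
    intro a b
    ext
    simp only [Subgroup.coe_mul, Subgroup.coe_mk]
    group

/-- Number of irreducible complex representations of `G` of dimension `d`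
(counted up to equivalence, realized on the model space `Fin d → ℂ`). -/
def numIrrepsOfDim (G : Type*) [Group G] (d : ℕ) : ℕ :=
  Nat.card (Quot (fun ρ₁ ρ₂ : {ρ : Representation ℂ G (Fin d → ℂ) // IsIrreducibleRep ρ} =>
    RepIso ρ₁.1 ρ₂.1))

/-- The representation `Ind_N^{NH₀}(χ)` of the subgroup `N ⊔ H₀ = NH₀` (for `N` normal)
induced from the one-dimensional representation `χ` of `N`. -/
def indToJoin {G : Type*} [Group G] (N H₀ : Subgroup G) (χ : N →* ℂˣ) :
    Representation ℂ ↥(N ⊔ H₀)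
      (indCarrier (charRep (χ.comp
        (Subgroup.subgroupOfEquivOfLe (le_sup_left : N ≤ N ⊔ H₀)).toMonoidHom))) :=
  ind _

/-!
Let `K = N H₀` and let `I` be the inertia group of `χ` in `G`. A `G`-conjugate of `Ind_N^K χ`
is induced from the corresponding conjugate of `χ`, so `G`-stability forces every `G`-conjugate
of `χ` to be a `K`-conjugate: `G = K I`. As `G = N H` and `N ≤ I`, this improves to `G = K T`
with `T = I ∩ H` abelian. Irreducibility gives `K ∩ I = N`: left translation by an element of
`K ∩ I` commutes with `Ind_N^K χ`, hence is a scalar, which is impossible off `N`.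

Extend `χ` from `T ∩ N` to a character `ψ` of the abelian group `T`. Then
`t ↦ ψ t • (f ↦ f (t⁻¹ · t))` is a representation of `T` on `Ind_N^K χ` that intertwines the
`K`-action with its conjugate and agrees with it on `K ∩ T ≤ N`, so the two glue to a
representation of `G = K T`.
-/

theorem Subgroup.exists_mul_eq_of_sup_eq_top {G : Type*} [Group G] {K T : Subgroup G} [K.Normal]
    (hKT : K ⊔ T = ⊤) (g : G) : ∃ k ∈ K, ∃ t ∈ T, k * t = g := by
  have hg : g ∈ ((K ⊔ T : Subgroup G) : Set G) := by simp [hKT]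
  rwa [Subgroup.normal_mul, Set.mem_mul] at hg

theorem MonoidHom.exists_extend_of_sup_eq_top {G M : Type*} [Group G] [Monoid M]
    {K T : Subgroup G} [K.Normal] (hKT : K ⊔ T = ⊤) (ρ : K →* M) (α : T →* M)
    (hconj : ∀ (t : T) (k : K), α t * ρ k = ρ (MulAut.conjNormal (t : G) k) * α t)
    (hagree : ∀ (k : K) (t : T), (k : G) = t → ρ k = α t) :
    ∃ τ : G →* M, ∀ k : K, τ k = ρ k := by
  let φ : T →* MulAut K := MulAut.conjNormal.comp T.subtype
  let π : K ⋊[φ] T →* G :=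
    SemidirectProduct.lift K.subtype T.subtype fun t => by ext k; simp [φ]
  let L : K ⋊[φ] T →* Mˣ :=
    SemidirectProduct.lift ρ.toHomUnits α.toHomUnits fun t => by
      ext k
      simp only [MonoidHom.coe_comp, Function.comp_apply, MulEquiv.coe_toMonoidHom,
        MonoidHom.coe_toHomUnits, MulAut.conj_apply, Units.val_mul]
      rw [hconj, mul_assoc, ← α.coe_toHomUnits, Units.mul_inv, mul_one]
      rfl
  have hπ : Function.Surjective π := by
    intro g
    obtain ⟨k, hk, t, ht, rfl⟩ := Subgroup.exists_mul_eq_of_sup_eq_top hKT g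
    exact ⟨⟨⟨k, hk⟩, ⟨t, ht⟩⟩, rfl⟩
  have hker : π.ker ≤ L.ker := by
    rintro ⟨k, t⟩ h
    have hkt : (k : G) = (t⁻¹ : T) := eq_inv_of_mul_eq_one_left h
    have hprod : (⟨k, t⟩ : K ⋊[φ] T) = .inl k * .inr t := by ext <;> simp
    rw [MonoidHom.mem_ker, hprod, map_mul, SemidirectProduct.lift_inl,
      SemidirectProduct.lift_inr]
    ext
    simp [hagree k t⁻¹ hkt, ← map_mul]
  -- `τ (k * t) = ρ k * α t`, descended from `K ⋊ T` along the multiplication map `π`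
  refine ⟨(Units.coeHom M).comp (π.liftOfSurjective hπ ⟨L, hker⟩), fun k => ?_⟩
  have hπk : π (SemidirectProduct.inl k) = k := by simp [π]
  simp [← hπk, L]

theorem Subgroup.sup_inf_eq_top_of_le {G : Type*} [Group G] {N K S H : Subgroup G}
    [N.Normal] [K.Normal] (hNK : N ≤ K) (hNS : N ≤ S) (hNH : N ⊔ H = ⊤) (hKS : K ⊔ S = ⊤) :
    K ⊔ (S ⊓ H) = ⊤ := by
  refine eq_top_iff.mpr fun g _ => ?_
  obtain ⟨k, hk, s, hs, rfl⟩ := exists_mul_eq_of_sup_eq_top hKS g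
  obtain ⟨n, hn, h, hh, rfl⟩ := exists_mul_eq_of_sup_eq_top hNH s
  have hhS : h ∈ S := by simpa using S.mul_mem (S.inv_mem (hNS hn)) hs
  rw [← mul_assoc]
  exact mul_mem (mem_sup_left (mul_mem hk (hNK hn))) (mem_sup_right ⟨hhS, hh⟩)

section Inertia

variable {G M : Type*} [Group G] [CommMonoid M] {N : Subgroup G} [N.Normal]

def inertia (χ : N →* M) : Subgroup G where
  carrier := {g | ∀ n, χ (MulAut.conjNormal g n) = χ n}
  one_mem' := by simp
  mul_mem' {a b} ha hb n := by rw [map_mul, MulAut.mul_apply, ha, hb]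
  inv_mem' {g} hg n := by
    rw [← hg, ← MulAut.mul_apply, ← map_mul, mul_inv_cancel, map_one, MulAut.one_apply]

theorem le_inertia (χ : N →* M) : N ≤ inertia χ := fun m hm n => by
  rw [show MulAut.conjNormal m n = ⟨m, hm⟩ * n * (⟨m, hm⟩ : N)⁻¹ from rfl, map_mul, map_mul,
    mul_right_comm, ← map_mul, mul_inv_cancel, map_one, one_mul]

theorem mul_inv_mem_inertia_iff {χ : N →* M} {g k : G} :
    g * k⁻¹ ∈ inertia χ ↔ ∀ n, χ (MulAut.conjNormal g n) = χ (MulAut.conjNormal k n) := by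
  refine ⟨fun h n => ?_, fun h n => ?_⟩
  · rw [← h (MulAut.conjNormal k n), ← MulAut.mul_apply, ← map_mul, inv_mul_cancel_right]
  · rw [map_mul, MulAut.mul_apply, h, ← MulAut.mul_apply, ← map_mul, mul_inv_cancel, map_one,
      MulAut.one_apply]

end Inertia

theorem IsIrreducibleRep.exists_eq_smul_one {G V : Type*} [Group G] [AddCommGroup V]
    [Module ℂ V] [FiniteDimensional ℂ V] {ρ : Representation ℂ G V} (hρ : IsIrreducibleRep ρ)
    (T : Module.End ℂ V) (hT : ∀ g, Commute T (ρ g)) : ∃ c : ℂ, T = c • 1 := by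
  have := hρ.1
  obtain ⟨c, hc⟩ := T.exists_eigenvalue
  have hinv : ∀ g v, v ∈ T.eigenspace c → ρ g v ∈ T.eigenspace c := fun g v hv => by
    rw [Module.End.mem_eigenspace_iff] at hv ⊢
    rw [← Module.End.mul_apply, (hT g).eq, Module.End.mul_apply, hv, map_smul]
  rcases hρ.2 _ hinv with hbot | htop
  · exact absurd hbot hc
  · refine ⟨c, LinearMap.ext fun v => ?_⟩
    exact Module.End.mem_eigenspace_iff.mp (htop ▸ Submodule.mem_top)

def Representation.twist {k G V : Type*} [CommSemiring k] [Monoid G] [AddCommMonoid V]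
    [Module k V] (ρ : Representation k G V) (ψ : G →* kˣ) : Representation k G V where
  toFun g := (ψ g : k) • ρ g
  map_one' := by simp
  map_mul' g h := by rw [map_mul, map_mul, Units.val_mul, smul_mul_smul_comm]

section IndChar

variable {G : Type*} [Group G] {N K : Subgroup G} (hNK : N ≤ K) (χ : N →* ℂˣ)

abbrev charRepOfLe : Representation ℂ (N.subgroupOf K) ℂ :=
  charRep (χ.comp (Subgroup.subgroupOfEquivOfLe hNK).toMonoidHom)

theorem mem_indCarrier_charRepOfLe {f : K → ℂ} :
    f ∈ indCarrier (charRepOfLe hNK χ) ↔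
      ∀ (n : N) (k : K), f (Subgroup.inclusion hNK n * k) = χ n * f k := by
  refine ⟨fun hf n k => ?_, fun hf n k => ?_⟩
  · exact hf ⟨Subgroup.inclusion hNK n, n.2⟩ k
  · exact hf ⟨n.1, n.2⟩ k

theorem ind_apply_coe (k : K) (f : indCarrier (charRepOfLe hNK χ)) (x : K) :
    (ind (charRepOfLe hNK χ) k f : K → ℂ) x = f.1 (x * k) := rfl

open scoped Classical in
def extendByZero : indCarrier (charRepOfLe hNK χ) :=
  ⟨fun k => if h : (k : G) ∈ N then (χ ⟨k, h⟩ : ℂ) else 0, by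
    rw [mem_indCarrier_charRepOfLe]
    intro n k
    by_cases hk : (k : G) ∈ N
    · have hnk : ((Subgroup.inclusion hNK n * k : K) : G) ∈ N := mul_mem n.2 hk
      rw [dif_pos hnk, dif_pos hk, ← Units.val_mul, ← map_mul]
      rfl
    · have hnk : ((Subgroup.inclusion hNK n * k : K) : G) ∉ N := by
        simpa [Subgroup.mul_mem_cancel_left N n.2] using hk
      rw [dif_neg hnk, dif_neg hk, mul_zero]⟩

theorem extendByZero_apply_of_mem {k : K} (hk : (k : G) ∈ N) :
    (extendByZero hNK χ).1 k = χ ⟨k, hk⟩ := dif_pos hk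

theorem extendByZero_apply_of_notMem {k : K} (hk : (k : G) ∉ N) :
    (extendByZero hNK χ).1 k = 0 := dif_neg hk

theorem extendByZero_apply_one : (extendByZero hNK χ).1 1 = 1 := by
  rw [extendByZero_apply_of_mem hNK χ (one_mem N)]
  exact congrArg Units.val (map_one χ)

theorem extendByZero_ne_zero : extendByZero hNK χ ≠ 0 := fun h => by
  simpa [h] using extendByZero_apply_one hNK χ

theorem ind_inclusion_extendByZero (n : N) :
    ind (charRepOfLe hNK χ) (Subgroup.inclusion hNK n) (extendByZero hNK χ)
      = (χ n : ℂ) • extendByZero hNK χ := by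
  ext k
  rw [ind_apply_coe, Submodule.coe_smul, Pi.smul_apply, smul_eq_mul]
  by_cases hk : (k : G) ∈ N
  · have hkn : ((k * Subgroup.inclusion hNK n : K) : G) ∈ N := mul_mem hk n.2
    rw [extendByZero_apply_of_mem hNK χ hk, extendByZero_apply_of_mem hNK χ hkn, mul_comm,
      ← Units.val_mul, ← map_mul]
    rfl
  · have hkn : ((k * Subgroup.inclusion hNK n : K) : G) ∉ N := by
      simpa [Subgroup.mul_mem_cancel_right N n.2] using hk
    rw [extendByZero_apply_of_notMem hNK χ hk, extendByZero_apply_of_notMem hNK χ hkn, mul_zero]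

variable [N.Normal]

variable {hNK χ} in
theorem apply_mul_inclusion {f : K → ℂ} (hf : f ∈ indCarrier (charRepOfLe hNK χ))
    (k : K) (n : N) :
    f (k * Subgroup.inclusion hNK n) = χ (MulAut.conjNormal (k : G) n) * f k := by
  rw [← (mem_indCarrier_charRepOfLe hNK χ).1 hf]
  congr 1
  ext
  simp

def leftTransl (u : K) (hu : (u : G) ∈ inertia χ) :
    Module.End ℂ (indCarrier (charRepOfLe hNK χ)) where
  toFun f := ⟨fun k => f.1 (u * k), by
    rw [mem_indCarrier_charRepOfLe]
    intro n k
    have hcomm : u * (Subgroup.inclusion hNK n * k)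
        = Subgroup.inclusion hNK (MulAut.conjNormal (u : G) n) * (u * k) := by
      ext
      simp [mul_assoc]
    rw [hcomm, (mem_indCarrier_charRepOfLe hNK χ).1 f.2, hu n]⟩
  map_add' _ _ := rfl
  map_smul' _ _ := rfl

theorem mem_of_mem_inertia [Finite K] (hIrr : IsIrreducibleRep (ind (charRepOfLe hNK χ)))
    {u : K} (hu : (u : G) ∈ inertia χ) : (u : G) ∈ N := by
  by_contra huN
  obtain ⟨c, hc⟩ := hIrr.exists_eq_smul_one (leftTransl hNK χ u hu) fun g =>
    LinearMap.ext fun f => Subtype.ext <| funext fun k => congrArg f.1 (mul_assoc u k g)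
  have h := congrArg (fun f => f.1 u⁻¹) (LinearMap.congr_fun hc (extendByZero hNK χ))
  have huN' : ((u⁻¹ : K) : G) ∉ N := by simpa using huN
  simp [leftTransl, extendByZero_apply_one, extendByZero_apply_of_notMem hNK χ huN'] at h

theorem sup_inertia_eq_top (hK : K.Normal)
    (hstab : ∀ g : G,
      RepIso ((ind (charRepOfLe hNK χ)).comp (conjHom K g (fun k hk => hK.conj_mem k hk g)))
        (ind (charRepOfLe hNK χ))) :
    K ⊔ inertia χ = ⊤ := by
  refine eq_top_iff.mpr fun g _ => ?_
  obtain ⟨e, he⟩ := hstab g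
  set w := e (extendByZero hNK χ)
  have hw : ∀ n : N, ind (charRepOfLe hNK χ) (Subgroup.inclusion hNK n) w
      = (χ (MulAut.conjNormal g n) : ℂ) • w := fun n => by
    rw [← he, MonoidHom.comp_apply,
      show conjHom K g _ (Subgroup.inclusion hNK n)
        = Subgroup.inclusion hNK (MulAut.conjNormal g n) from rfl,
      ind_inclusion_extendByZero, map_smul]
  obtain ⟨k, hk⟩ : ∃ k, w.1 k ≠ 0 := by
    by_contra! h
    exact extendByZero_ne_zero hNK χ (e.map_eq_zero_iff.1 (Subtype.ext (funext h)))
  have hgk : g * (k : G)⁻¹ ∈ inertia χ := mul_inv_mem_inertia_iff.2 fun n => by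
    have h := congrArg (fun f => f.1 k) (hw n)
    simp only [ind_apply_coe, apply_mul_inclusion w.2] at h
    exact Units.ext (mul_right_cancel₀ hk h).symm
  rw [← inv_mul_cancel_right g (k : G)]
  exact mul_mem (Subgroup.mem_sup_right hgk) (Subgroup.mem_sup_left k.2)

variable [K.Normal]

theorem conjNormal_inclusion (g : G) (n : N) :
    MulAut.conjNormal g (Subgroup.inclusion hNK n)
      = Subgroup.inclusion hNK (MulAut.conjNormal g n) := rfl

def conjRep : Representation ℂ (inertia χ) (indCarrier (charRepOfLe hNK χ)) where
  toFun s :=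
    { toFun f := ⟨fun k => f.1 (MulAut.conjNormal (s : G)⁻¹ k), by
        rw [mem_indCarrier_charRepOfLe]
        intro n k
        rw [map_mul, conjNormal_inclusion, (mem_indCarrier_charRepOfLe hNK χ).1 f.2,
          (inv_mem s.2) n]⟩
      map_add' _ _ := rfl
      map_smul' _ _ := rfl }
  map_one' := by ext; simp
  map_mul' s t := by ext; simp [mul_inv_rev]

theorem conjRep_apply_coe (s : inertia χ) (f : indCarrier (charRepOfLe hNK χ)) (k : K) :
    (conjRep hNK χ s f : K → ℂ) k = f.1 (MulAut.conjNormal (s : G)⁻¹ k) := rfl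

theorem conjRep_mul_ind (s : inertia χ) (k : K) :
    conjRep hNK χ s * ind (charRepOfLe hNK χ) k
      = ind (charRepOfLe hNK χ) (MulAut.conjNormal (s : G) k) * conjRep hNK χ s := by
  ext f x
  simp [conjRep_apply_coe, ind_apply_coe]

theorem ind_inclusion_eq_smul_conjRep (n : N) :
    ind (charRepOfLe hNK χ) (Subgroup.inclusion hNK n)
      = (χ n : ℂ) • conjRep hNK χ ⟨n, le_inertia χ n.2⟩ := by
  ext f x
  have hx : x * Subgroup.inclusion hNK n
      = Subgroup.inclusion hNK n * MulAut.conjNormal (n : G)⁻¹ x := by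
    ext
    simp [mul_assoc]
  rw [ind_apply_coe, hx, (mem_indCarrier_charRepOfLe hNK χ).1 f.2]
  rfl

theorem exists_extension_of_sup_eq_top [Finite K]
    (hIrr : IsIrreducibleRep (ind (charRepOfLe hNK χ))) {T : Subgroup G} (hT : T ≤ inertia χ)
    (hKT : K ⊔ T = ⊤) (ψ : T →* ℂˣ) (hψ : ∀ (t : T) (ht : (t : G) ∈ N), ψ t = χ ⟨t, ht⟩) :
    ∃ τ : Representation ℂ G (indCarrier (charRepOfLe hNK χ)),
      ∀ k : K, τ k = ind (charRepOfLe hNK χ) k := by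
  let α := Representation.twist ((conjRep hNK χ).comp (Subgroup.inclusion hT)) ψ
  refine MonoidHom.exists_extend_of_sup_eq_top hKT _ α (fun t k => ?_) (fun k t hkt => ?_)
  · show (ψ t : ℂ) • conjRep hNK χ (Subgroup.inclusion hT t) * _ = _ * ((ψ t : ℂ) • _)
    rw [smul_mul_assoc, mul_smul_comm, conjRep_mul_ind]
    rfl
  · obtain ⟨x, hxK⟩ := k
    obtain ⟨x, hxT⟩ := t
    obtain rfl : _ = x := hkt
    have hxN : x ∈ N := mem_of_mem_inertia hNK χ hIrr (u := ⟨x, hxK⟩) (hT hxT)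
    change ind _ (Subgroup.inclusion hNK ⟨x, hxN⟩) = α ⟨x, hxT⟩
    rw [ind_inclusion_eq_smul_conjRep, ← hψ ⟨x, hxT⟩ hxN]
    rfl

end IndChar

open scoped IsMulCommutative in
theorem exists_monoidHom_extend_restrict {G : Type*} [Group G] {N T : Subgroup G}
    [IsMulCommutative T] [Finite T] (χ : N →* ℂˣ) :
    ∃ ψ : T →* ℂˣ, ∀ (t : T) (ht : (t : G) ∈ N), ψ t = χ ⟨t, ht⟩ := by
  obtain ⟨ψ, hψ⟩ := MonoidHom.domRestrict_surjective (M := ℂ) (N.subgroupOf T)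
    (χ.comp ((T.subtype.comp (N.subgroupOf T).subtype).codRestrict N fun t => t.2))
  exact ⟨ψ, fun t ht => DFunLike.congr_fun hψ ⟨t, ht⟩⟩

theorem statement18_general (G : Type*) [Group G] [Finite G]
    (N H : Subgroup G) [N.Normal]
    (hHab : ∀ a b : G, a ∈ H → b ∈ H → a * b = b * a)
    (hG : N ⊔ H = ⊤)
    (H₀ : Subgroup G)
    (χ : N →* ℂˣ)
    (hKnorm : (N ⊔ H₀).Normal)
    (hIrr : IsIrreducibleRep (indToJoin N H₀ χ))
    (hstab : ∀ g : G,
      RepIso ((indToJoin N H₀ χ).comp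
          (conjHom (N ⊔ H₀) g (fun k hk => hKnorm.conj_mem k hk g)))
        (indToJoin N H₀ χ)) :
    ∃ τ : Representation ℂ G
      (indCarrier (charRep (χ.comp
        (Subgroup.subgroupOfEquivOfLe (le_sup_left : N ≤ N ⊔ H₀)).toMonoidHom))),
      ∀ k : ↥(N ⊔ H₀), τ (k : G) = indToJoin N H₀ χ k := by
  have := hKnorm
  have : IsMulCommutative ↥(inertia χ ⊓ H) :=
    isMulCommutative_iff.2 fun a b => Subtype.ext (hHab _ _ a.2.2 b.2.2)
  obtain ⟨ψ, hψ⟩ := exists_monoidHom_extend_restrict (T := inertia χ ⊓ H) χ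
  have hKT : N ⊔ H₀ ⊔ (inertia χ ⊓ H) = ⊤ := Subgroup.sup_inf_eq_top_of_le le_sup_left
    (le_inertia χ) hG (sup_inertia_eq_top le_sup_left χ hKnorm hstab)
  exact exists_extension_of_sup_eq_top le_sup_left χ hIrr inf_le_left hKT ψ hψ

/-- Let `G` be a finite group, `N ⊴ G`, `H ≤ G` abelian with `G = NH`, `H₀ ≤ H`
and `χ : N → ℂˣ` a one-dimensional representation such that `Ind_N^{NH₀}(χ)` is irreducible and
stabilized by `G`. Then `Ind_N^{NH₀}(χ)` extends to a representation of `G`. -/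
theorem statement18 (G : Type*) [Group G] [Finite G]
    (N H : Subgroup G) [N.Normal]
    (hHab : ∀ a b : G, a ∈ H → b ∈ H → a * b = b * a)
    (hG : N ⊔ H = ⊤)
    (H₀ : Subgroup G) (hH₀ : H₀ ≤ H)
    (χ : N →* ℂˣ)
    (hKnorm : (N ⊔ H₀).Normal)
    (hIrr : IsIrreducibleRep (indToJoin N H₀ χ))
    (hstab : ∀ g : G,
      RepIso ((indToJoin N H₀ χ).comp
          (conjHom (N ⊔ H₀) g (fun k hk => hKnorm.conj_mem k hk g)))
        (indToJoin N H₀ χ)) :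
    ∃ τ : Representation ℂ G
      (indCarrier (charRep (χ.comp
        (Subgroup.subgroupOfEquivOfLe (le_sup_left : N ≤ N ⊔ H₀)).toMonoidHom))),
      ∀ k : ↥(N ⊔ H₀), τ (k : G) = indToJoin N H₀ χ k :=
  statement18_general G N H hHab hG H₀ χ hKnorm hIrr hstab
end
end
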